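/- arXiv:1402.3204 — 4 statements merged into one kernel-verified Lean document; each statement's English description precedes it below -/
import Mathlib

section
/- Let B \subseteq A be an inclusion of commutative rings such that A is Noetherian and B is a direct summand of A as a B-module (i.e. there exists a B-linear retraction \rho : A \to B with \rho|_B = id). Then B is Noetherian. -/
/-- If `A` is a Noetherian commutative ring and `B → A` a ring map admitting a `B`-linear
retraction `ρ : A → B` (so `B` is a direct summand of `A` as a `B`-module), then `B` is
Noetherian. -/
theorem isNoetherianRing_of_linear_retraction
    {B A : Type*} [CommRing B] [CommRing A] [Algebra B A] [IsNoetherianRing A]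
    (ρ : A →ₗ[B] B) (hρ : ∀ b : B, ρ (algebraMap B A b) = b) :
    IsNoetherianRing B := by
  have key : ∀ J : Ideal B, Ideal.comap (algebraMap B A) (Ideal.map (algebraMap B A) J) = J := by
    intro J
    apply le_antisymm
    · intro b hb
      have hb' : algebraMap B A b ∈ Ideal.span ((algebraMap B A) '' (J : Set B)) := by
        rwa [← Ideal.map, ← Ideal.mem_comap]
      obtain ⟨c, hsupp, hc⟩ := Submodule.mem_span_set.mp hb'
      rw [← hρ b, ← hc, Finsupp.sum, map_sum]
      apply J.sum_mem
      intro x hx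
      obtain ⟨j, hj, rfl⟩ := hsupp hx
      have h1 : c (algebraMap B A j) • algebraMap B A j
          = j • c (algebraMap B A j) := by
        rw [smul_eq_mul, mul_comm, Algebra.smul_def]
      rw [h1, map_smul, smul_eq_mul]
      exact J.mul_mem_right _ hj
    · exact Ideal.le_comap_map
  rw [isNoetherianRing_iff, isNoetherian_iff]
  have hA : WellFounded ((· > ·) : Ideal A → Ideal A → Prop) :=
    (isNoetherian_iff (R := A) (M := A)).mp inferInstance
  refine Subrelation.wf ?_ (InvImage.wf (fun J : Ideal B => Ideal.map (algebraMap B A) J) hA)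
  intro J J' h
  refine lt_of_le_of_ne (Ideal.map_mono h.le) fun he => h.ne' ?_
  rw [← key J, ← key J']
  exact congrArg (Ideal.comap (algebraMap B A)) he.symm
end

section
/- Let B \subseteq A be commutative rings with a B-linear retraction \rho : A \to B (\rho|_B = id, \rho(b a) = b\rho(a) for b \in B). Let M be a finitely generated A-module over a Noetherian ring A, and let e : M \to M be an additive idempotent with image N = e(M) such that e is B-linear and satisfies the Reynolds identity e(a \cdot e(m)) = \rho(a) \cdot e(m) for all a \in A, m \in M. Then N is a finitely generated B-module. -/
/-- Reynolds operator: let `B → A` be commutative rings with a `B`-linear retraction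
`ρ : A → B`, `A` Noetherian, `M` a finitely generated `A`-module, and `e : M → M` a
`B`-linear idempotent satisfying the Reynolds identity `e (a • e m) = ρ(a) • e m`.
Then the image `N = e(M)` is a finitely generated `B`-module. -/
theorem range_of_reynolds_operator_fg
    {B A M : Type*} [CommRing B] [CommRing A] [Algebra B A] [IsNoetherianRing A]
    [AddCommGroup M] [Module A M] [Module B M] [IsScalarTower B A M]
    (hM : (⊤ : Submodule A M).FG)
    (ρ : A →ₗ[B] B) (hρ : ∀ b : B, ρ (algebraMap B A b) = b)
    (e : M →ₗ[B] M) (he : e ∘ₗ e = e)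
    (hrey : ∀ (a : A) (m : M), e (a • e m) = ρ a • e m) :
    (LinearMap.range e).FG := by
  classical
  haveI : Module.Finite A M := ⟨hM⟩
  haveI : IsNoetherian A M := inferInstance
  have hee : ∀ x : M, e (e x) = e x := fun x => by
    have := DFunLike.congr_fun he x
    simpa using this
  -- the A-submodule generated by the range of e
  set P : Submodule A M := Submodule.span A (Set.range e) with hP
  obtain ⟨T, hT⟩ := IsNoetherian.noetherian P
  -- refine generators to lie in the range of e
  have hmem : ∀ t ∈ T, t ∈ Submodule.span A (Set.range e) := fun t ht => by
    rw [← hP, ← hT]; exact Submodule.subset_span ht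
  choose U hUsub hUmem using fun (t : T) =>
    Submodule.mem_span_finite_of_mem_span (hmem t t.2)
  set S : Finset M := T.attach.biUnion (fun t => U t) with hS
  have hSsub : (S : Set M) ⊆ Set.range e := by
    intro x hx
    simp only [hS, Finset.coe_biUnion, Set.mem_iUnion, Finset.mem_coe] at hx
    obtain ⟨t, _, hxU⟩ := hx
    exact hUsub t hxU
  have hSspan : Submodule.span A (S : Set M) = P := by
    apply le_antisymm
    · rw [hP]
      exact Submodule.span_mono hSsub
    · rw [← hT]
      apply Submodule.span_le.2
      intro t ht
      have : t ∈ Submodule.span A ((U ⟨t, ht⟩ : Finset M) : Set M) := hUmem ⟨t, ht⟩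
      refine Submodule.span_mono ?_ this
      intro x hx
      simp only [hS, Finset.coe_biUnion, Set.mem_iUnion, Finset.mem_coe]
      exact ⟨⟨t, ht⟩, Finset.mem_attach _ _, hx⟩
  -- each element of S is fixed by e
  have hfix : ∀ s ∈ S, e s = s := by
    intro s hs
    obtain ⟨m, rfl⟩ := hSsub hs
    exact hee m
  refine ⟨S, le_antisymm ?_ ?_⟩
  · -- span B S ≤ range e
    apply Submodule.span_le.2
    intro s hs
    exact ⟨s, hfix s hs⟩
  · -- range e ≤ span B S
    rintro v ⟨m, rfl⟩
    have hv : e m ∈ Submodule.span A (S : Set M) := by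
      rw [hSspan, hP]
      exact Submodule.subset_span ⟨m, rfl⟩
    obtain ⟨c, hc, hsum⟩ := Submodule.mem_span_set.1 hv
    have : e m = e (e m) := (hee m).symm
    rw [this, ← hsum, Finsupp.sum, map_sum]
    apply Submodule.sum_mem
    intro s hs
    have hsS : s ∈ S := hc hs
    have : e (c s • s) = ρ (c s) • s := by
      conv_lhs => rw [← hfix s hsS]
      rw [hrey, hfix s hsS]
    rw [this]
    exact Submodule.smul_mem _ _ (Submodule.subset_span hsS)
end

section
/- Let R be a Noetherian commutative ring, I \subseteq R an ideal, and suppose R is I-adically complete. Then for any finitely generated R-modules M and N, the natural map Hom_R(M, N) \to \varprojlim_n Hom_{R/I^n}(M/I^n M, N/I^n N) is a bijection. -/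
/-!
A finitely generated module `N` over a Noetherian `I`-adically complete ring is itself
`I`-adically complete: it is Hausdorff by Krull's intersection theorem (`I` lies in the Jacobson
radical), and precomplete because `R̂ ⊗ N → N̂` is onto while `R → R̂` is an isomorphism.
A compatible system `Fₙ : M → N/IⁿN` is then exactly a map `M → N̂ ≅ N`.
-/

open AdicCompletion TensorProduct

section

variable {R : Type*} [CommRing R] (I : Ideal R) (M : Type*) [AddCommGroup M] [Module R M]

theorem AdicCompletion.ofTensorProduct_comp_rTensor_of :
    (ofTensorProduct I M).restrictScalars R ∘ₗ (of I R).rTensor M =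
      of I M ∘ₗ (TensorProduct.lid R M).toLinearMap := by
  refine TensorProduct.ext' fun r x => ?_
  simp only [LinearMap.coe_comp, Function.comp_apply, LinearMap.rTensor_tmul,
    LinearMap.restrictScalars_apply, ofTensorProduct_tmul, LinearEquiv.coe_coe, lid_tmul,
    map_smul]
  exact algebraMap_smul (AdicCompletion I R) r (of I M x)

theorem AdicCompletion.of_surjective_of_finite [IsPrecomplete I R] [Module.Finite R M] :
    Function.Surjective (of I M) := by
  have h := (ofTensorProduct_surjective_of_finite I M).comp
    (LinearMap.rTensor_surjective M (of_surjective I R))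
  rw [← LinearMap.coe_restrictScalars R, ← LinearMap.coe_comp,
    ofTensorProduct_comp_rTensor_of] at h
  exact .of_comp (g := TensorProduct.lid R M) h

theorem IsAdicComplete.of_finite [IsNoetherianRing R] [IsAdicComplete I R] [Module.Finite R M] :
    IsAdicComplete I M :=
  { toIsHausdorff := .of_le_jacobson I M (IsAdicComplete.le_jacobson_bot I)
    toIsPrecomplete := of_surjective_iff.mp (of_surjective_of_finite I M) }

end

/-- Grothendieck existence, fully faithful half (affine case): over a Noetherian
`I`-adically complete ring `R`, for finitely generated modules `M, N`, every compatible
system of maps `M → N/IⁿN` comes from a unique map `M → N`; i.e.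
`Hom_R(M,N) → lim_n Hom_{R/Iⁿ}(M/IⁿM, N/IⁿN)` is bijective. -/
theorem hom_complete_bijective
    {R : Type u} [CommRing R] [IsNoetherianRing R] (I : Ideal R) [IsAdicComplete I R]
    {M N : Type u} [AddCommGroup M] [Module R M] [AddCommGroup N] [Module R N]
    [Module.Finite R N]
    (F : ∀ n : ℕ, M →ₗ[R] N ⧸ (I ^ n • ⊤ : Submodule R N))
    (hF : ∀ n : ℕ,
      (Submodule.mapQ (I ^ (n + 1) • ⊤ : Submodule R N) (I ^ n • ⊤ : Submodule R N)
          LinearMap.id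
          (by
            rw [Submodule.comap_id]
            exact Submodule.smul_mono_left (Ideal.pow_le_pow_right (Nat.le_succ n)))).comp
        (F (n + 1)) = F n) :
    ∃! f : M →ₗ[R] N,
      ∀ n : ℕ, (Submodule.mkQ (I ^ n • ⊤ : Submodule R N)).comp f = F n := by
  have := IsAdicComplete.of_finite I N
  have hF' : ∀ {n}, Submodule.factorPow I N (strictMono_id.monotone n.le_succ) ∘ₗ F (n + 1) =
      F n := hF _
  exact ⟨IsAdicComplete.StrictMono.lift I strictMono_id F hF',
    fun _ => IsAdicComplete.StrictMono.mkQ_comp_lift I strictMono_id F hF',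
    fun _ hg => IsAdicComplete.StrictMono.eq_lift I strictMono_id F hF' hg⟩
end

section
/- Let R be a Noetherian commutative ring, I \subseteq R an ideal, and suppose R is I-adically complete. Suppose given for each n \ge 1 a finitely generated R/I^n-module M_n together with isomorphisms M_{n+1} \otimes_{R/I^{n+1}} R/I^n \cong M_n compatible with composition. Then M = \varprojlim_n M_n is a finitely generated R-module and the natural maps M/I^n M \to M_n are isomorphisms for all n. -/
/-!
A surjection `φ₀ : Rᵏ → M₀` lifts along the surjections `Mₙ₊₁ → Mₙ` to compatible maps
`φₙ : Rᵏ → Mₙ`, all surjective by Nakayama because `I` lies in the Jacobson radical of the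
complete ring `R`. Their kernels satisfy `Kₙ = Kₙ₊₁ + Iⁿ⁺¹Rᵏ`; since `Rᵏ` is `I`-adically
complete, successive corrections converge, which upgrades this to `Kₙ = K∞ + Iⁿ⁺¹Rᵏ` for
`K∞ = ⋂ₙ Kₙ`. Hence `N = Rᵏ / K∞` is finitely generated with `N / Iⁿ⁺¹N ≅ Mₙ`.
-/

universe u

open Submodule

open AdicCompletion in
instance IsPrecomplete.pi {R : Type*} [CommRing R] (I : Ideal R) {ι : Type*} [Finite ι]
    (M : ι → Type*) [∀ i, AddCommGroup (M i)] [∀ i, Module R (M i)]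
    [∀ i, IsPrecomplete I (M i)] : IsPrecomplete I (∀ i, M i) := by
  classical
  have := Fintype.ofFinite ι
  rw [← of_surjective_iff]
  intro y
  choose x hx using fun i => of_surjective I (M i) (AdicCompletion.pi I M y i)
  refine ⟨x, (piEquivOfFintype I M).injective (funext fun i => ?_)⟩
  have hproj : AdicCompletion.pi I M (of I _ x) i = map I (LinearMap.proj i) (of I _ x) := rfl
  rw [piEquivOfFintype_apply, piEquivOfFintype_apply, ← hx, hproj, map_of]
  rfl

section

variable {R P N M' : Type*} [CommRing R] [AddCommGroup P] [Module R P] [AddCommGroup N]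
  [Module R N] [AddCommGroup M'] [Module R M']

theorem LinearMap.surjective_of_surjective_comp_of_ker_le_smul [Module.Finite R N]
    {I : Ideal R} (hI : I ≤ (⊥ : Ideal R).jacobson) {g : N →ₗ[R] M'} (hg : ker g ≤ I • ⊤)
    {h : P →ₗ[R] N} (hgh : Function.Surjective (g ∘ₗ h)) : Function.Surjective h := by
  refine LinearMap.surjective_of_surjective_comp_mkQ h I hI fun y => ?_
  obtain ⟨x, rfl⟩ := (I • ⊤ : Submodule R N).mkQ_surjective y
  obtain ⟨p, hp⟩ := hgh (g x)
  refine ⟨p, (Submodule.Quotient.eq _).mpr (hg ?_)⟩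
  rw [LinearMap.mem_ker, map_sub, ← LinearMap.comp_apply, hp, sub_self]

theorem LinearMap.ker_comp_eq_ker_sup_of_surjective {J : Ideal R} {g : N →ₗ[R] M'}
    (hg : ker g = J • ⊤) {h : P →ₗ[R] N} (hh : Function.Surjective h) :
    ker (g ∘ₗ h) = ker h ⊔ J • ⊤ := by
  have hJ : (J • ⊤ : Submodule R N) = map h (J • ⊤) := by
    rw [map_smul'', Submodule.map_top, LinearMap.range_eq_top.mpr hh]
  rw [LinearMap.ker_comp, hg, hJ, comap_map_eq, sup_comm]

end

section Chain

variable {R F : Type*} [CommRing R] [AddCommGroup F] [Module R F] {I : Ideal R}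
  {K : ℕ → Submodule R F}

theorem exists_seq_of_eq_sup_pow_smul (hK : ∀ n, K n = K (n + 1) ⊔ I ^ (n + 1) • ⊤) {n : ℕ}
    {x : F} (hx : x ∈ K n) : ∃ s : ℕ → F, s 0 = x ∧
      ∀ k, s k ∈ K (n + k) ∧ s k - s (k + 1) ∈ (I ^ (n + k + 1) • ⊤ : Submodule R F) := by
  have step : ∀ m, ∀ y ∈ K m, ∃ z ∈ K (m + 1), y - z ∈ (I ^ (m + 1) • ⊤ : Submodule R F) := by
    intro m y hy
    rw [hK m, mem_sup] at hy
    obtain ⟨z, hz, w, hw, rfl⟩ := hy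
    exact ⟨z, hz, by rwa [add_sub_cancel_left]⟩
  choose next next_mem sub_next_mem using step
  let s : ∀ k, K (n + k) := fun k =>
    Nat.rec ⟨x, hx⟩ (fun k y => ⟨next (n + k) y y.2, next_mem _ _ _⟩) k
  exact ⟨fun k => (s k).1, rfl, fun k => ⟨(s k).2, sub_next_mem (n + k) (s k).1 (s k).2⟩⟩

theorem IsPrecomplete.le_iInf_sup_pow_smul [IsPrecomplete I F]
    (hK : ∀ n, K n = K (n + 1) ⊔ I ^ (n + 1) • ⊤) (n : ℕ) :
    K n ≤ (⨅ m, K m) ⊔ I ^ (n + 1) • ⊤ := by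
  intro x hx
  obtain ⟨s, rfl, hs⟩ := exists_seq_of_eq_sup_pow_smul hK hx
  choose hs_mem hs_sub using hs
  have hpow : ∀ {a b : ℕ}, a ≤ b → (I ^ b • ⊤ : Submodule R F) ≤ I ^ a • ⊤ :=
    fun h => smul_mono_left (Ideal.pow_le_pow_right h)
  have hcauchy : AdicCompletion.IsAdicCauchy I F s :=
    (AdicCompletion.isAdicCauchy_iff I F s).mpr fun k =>
      SModEq.sub_mem.mpr (hpow (by omega) (hs_sub k))
  obtain ⟨y, hy⟩ := IsPrecomplete.prec ‹_› hcauchy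
  have hsy : ∀ k, s k - y ∈ (I ^ k • ⊤ : Submodule R F) := fun k => SModEq.sub_mem.mp (hy k)
  have hIK : ∀ m, (I ^ (m + 1) • ⊤ : Submodule R F) ≤ K m := fun m => hK m ▸ le_sup_right
  have hanti : Antitone K := antitone_nat_of_succ_le fun m => hK m ▸ le_sup_left
  have hy_mem : y ∈ ⨅ m, K m := mem_iInf _ |>.mpr fun m => by
    simpa using
      sub_mem (hanti (by omega : m ≤ n + (m + 1)) (hs_mem (m + 1))) (hIK m (hsy (m + 1)))
  have htele : s 0 - s (n + 1) ∈ (I ^ (n + 1) • ⊤ : Submodule R F) := by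
    rw [← Finset.sum_range_sub']
    exact sum_mem fun k _ => hpow (by omega) (hs_sub k)
  rw [show s 0 = y + ((s 0 - s (n + 1)) + (s (n + 1) - y)) by abel]
  exact add_mem_sup hy_mem (add_mem htele (hsy (n + 1)))

end Chain

section Tower

variable {R P : Type*} [CommRing R] [AddCommGroup P] [Module R P] {M : ℕ → Type*}
  [∀ n, AddCommGroup (M n)] [∀ n, Module R (M n)] (f : ∀ n, M (n + 1) →ₗ[R] M n)

theorem exists_compatible_lifts [Module.Projective R P] (hsurj : ∀ n, Function.Surjective (f n))
    (φ₀ : P →ₗ[R] M 0) : ∃ φ : ∀ n, P →ₗ[R] M n, φ 0 = φ₀ ∧ ∀ n, f n ∘ₗ φ (n + 1) = φ n := by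
  choose lift hlift using fun n (g : P →ₗ[R] M n) =>
    Module.projective_lifting_property (f n) g (hsurj n)
  exact ⟨fun n => Nat.rec φ₀ (fun n g => lift n g) n, rfl, fun n => hlift n _⟩

variable {f} {φ : ∀ n, P →ₗ[R] M n}

theorem surjective_of_compatible_of_ker_le_smul [∀ n, Module.Finite R (M n)] {I : Ideal R}
    (hφ : ∀ n, f n ∘ₗ φ (n + 1) = φ n) (hI : I ≤ (⊥ : Ideal R).jacobson)
    (hker : ∀ n, LinearMap.ker (f n) ≤ I • ⊤)
    (h₀ : Function.Surjective (φ 0)) (n : ℕ) : Function.Surjective (φ n) := by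
  induction n with
  | zero => exact h₀
  | succ n ih =>
    exact LinearMap.surjective_of_surjective_comp_of_ker_le_smul hI (hker n) (hφ n ▸ ih)

theorem ker_liftQ_iInf_ker {I : Ideal R} [IsPrecomplete I P]
    (hφ : ∀ n, f n ∘ₗ φ (n + 1) = φ n) (hsurj : ∀ n, Function.Surjective (φ n))
    (hker : ∀ n, LinearMap.ker (f n) = I ^ (n + 1) • ⊤) (n : ℕ) :
    LinearMap.ker ((⨅ m, LinearMap.ker (φ m)).liftQ (φ n) (iInf_le _ n)) = I ^ (n + 1) • ⊤ := by
  have hK : ∀ n, LinearMap.ker (φ n) = LinearMap.ker (φ (n + 1)) ⊔ I ^ (n + 1) • ⊤ := fun n =>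
    hφ n ▸ LinearMap.ker_comp_eq_ker_sup_of_surjective (hker n) (hsurj (n + 1))
  have hKn : LinearMap.ker (φ n) = (⨅ m, LinearMap.ker (φ m)) ⊔ I ^ (n + 1) • ⊤ :=
    le_antisymm (IsPrecomplete.le_iInf_sup_pow_smul hK n)
      (sup_le (iInf_le _ n) (hK n ▸ le_sup_right))
  rw [ker_liftQ, hKn, Submodule.map_sup, mkQ_map_self, bot_sup_eq, map_smul'',
    Submodule.map_top, range_mkQ]

end Tower

theorem coherent_system_algebrizes_general
    {R : Type u} [CommRing R] (I : Ideal R) [IsAdicComplete I R]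
    (M : ℕ → Type u) [∀ n, AddCommGroup (M n)] [∀ n, Module R (M n)]
    (hfg : ∀ n, (⊤ : Submodule R (M n)).FG)
    (f : ∀ n, M (n + 1) →ₗ[R] M n)
    (hsurj : ∀ n, Function.Surjective (f n))
    (hker : ∀ n, LinearMap.ker (f n) = (I ^ (n + 1) • ⊤ : Submodule R (M (n + 1)))) :
    ∃ N : ModuleCat.{u} R,
      (⊤ : Submodule R N).FG ∧
      ∃ π : ∀ n, (N : Type u) →ₗ[R] M n,
        (∀ n, Function.Surjective (π n)) ∧
        (∀ n, LinearMap.ker (π n) = (I ^ (n + 1) • ⊤ : Submodule R N)) ∧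
        (∀ n, (f n).comp (π (n + 1)) = π n) := by
  have (n : ℕ) : Module.Finite R (M n) := ⟨hfg n⟩
  obtain ⟨k, φ₀, hφ₀⟩ := Module.Finite.exists_fin' R (M 0)
  obtain ⟨φ, rfl, hφ⟩ := exists_compatible_lifts f hsurj φ₀
  have hφsurj := surjective_of_compatible_of_ker_le_smul hφ (IsAdicComplete.le_jacobson_bot I)
    (fun n => (hker n).trans_le (smul_mono_left (Ideal.pow_le_self n.succ_ne_zero))) hφ₀
  set K := ⨅ n, LinearMap.ker (φ n)
  refine ⟨ModuleCat.of R ((Fin k → R) ⧸ K), Module.finite_def.mp inferInstance,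
    fun n => K.liftQ (φ n) (iInf_le _ n), fun n => ?_, ker_liftQ_iInf_ker hφ hφsurj hker,
    fun n => linearMap_qext _ ?_⟩
  · rw [← LinearMap.range_eq_top, range_liftQ, LinearMap.range_eq_top.mpr (hφsurj n)]
  · rw [LinearMap.comp_assoc, liftQ_mkQ, liftQ_mkQ, hφ]

/-- Grothendieck existence, essential surjectivity (affine case): over a Noetherian
`I`-adically complete ring `R`, every compatible system of finitely generated
`R/Iⁿ⁺¹`-modules `Mₙ` (i.e. `Iⁿ⁺¹ Mₙ = 0`, with surjections `Mₙ₊₁ → Mₙ` of kernel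
`Iⁿ⁺¹ Mₙ₊₁`) algebrizes: there is a finitely generated `R`-module `N` with compatible
surjections `N → Mₙ` of kernel `Iⁿ⁺¹ N`, i.e. `N/Iⁿ⁺¹N ≅ Mₙ` for all `n`. -/
theorem coherent_system_algebrizes
    {R : Type u} [CommRing R] [IsNoetherianRing R] (I : Ideal R) [IsAdicComplete I R]
    (M : ℕ → Type u) [∀ n, AddCommGroup (M n)] [∀ n, Module R (M n)]
    (hfg : ∀ n, (⊤ : Submodule R (M n)).FG)
    (hkill : ∀ n, (I ^ (n + 1) • ⊤ : Submodule R (M n)) = ⊥)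
    (f : ∀ n, M (n + 1) →ₗ[R] M n)
    (hsurj : ∀ n, Function.Surjective (f n))
    (hker : ∀ n, LinearMap.ker (f n) = (I ^ (n + 1) • ⊤ : Submodule R (M (n + 1)))) :
    ∃ N : ModuleCat.{u} R,
      (⊤ : Submodule R N).FG ∧
      ∃ π : ∀ n, (N : Type u) →ₗ[R] M n,
        (∀ n, Function.Surjective (π n)) ∧
        (∀ n, LinearMap.ker (π n) = (I ^ (n + 1) • ⊤ : Submodule R N)) ∧
        (∀ n, (f n).comp (π (n + 1)) = π n) :=
  coherent_system_algebrizes_general I M hfg f hsurj hker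
end
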